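/- Let n ≥ 2 and c ≥ 0 be integers and let (A_0, A_1, …, A_n) be the A-partition of the directed graph cDB⁺(n+c, n, n). For every i with 2 ≤ i ≤ n there exists a subset S_i ⊆ A_i of cardinality (n+c−1)!/(c+1)! such that every vertex of A_{i−1} is an out-neighbor of some vertex of S_i (i.e., S_i dominates all vertices in A_{i−1}). -/

import Mathlib

/-- A sequence `x` of length `n` over the alphabet `Fin d` is `t`-constrained if
equal symbols occur at positions at distance at least `t`. -/
def dbConstrained (d t n : ℕ) (x : Fin n → Fin d) : Prop :=
  ∀ i j : Fin n, i < j → x i = x j → t ≤ (j : ℕ) - (i : ℕ)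

/-- The vertex set `V(d,t,n)` of the `t`-constrained de Bruijn graph: all
`t`-constrained sequences of length `n` over a `d`-letter alphabet. -/
abbrev dbVtx (d t n : ℕ) : Type := {x : Fin n → Fin d // dbConstrained d t n x}

/-- `dbShift x y` holds when there is a directed de Bruijn edge from `x` to `y`,
i.e. `y` is obtained from `x` by deleting its first symbol and appending a new
last symbol. -/
def dbShift {d t n : ℕ} (x y : dbVtx d t n) : Prop :=
  ∀ (i : Fin n) (h : (i : ℕ) + 1 < n), y.val i = x.val ⟨(i : ℕ) + 1, h⟩

/-- `S` is a dominating set of the directed `t`-constrained de Bruijn graph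
`cDB⁺(d,t,n)`: every vertex is dominated by (equal to, or an out-neighbor of)
some element of `S`. -/
def dbDirDominating {d t n : ℕ} (S : Set (dbVtx d t n)) : Prop :=
  ∀ v : dbVtx d t n, ∃ s ∈ S, s = v ∨ dbShift s v

/-- The domination number `γ(cDB⁺(d,t,n))` of the directed `t`-constrained
de Bruijn graph. -/
noncomputable def gammaDir (d t n : ℕ) : ℕ :=
  sInf {k | ∃ S : Set (dbVtx d t n), S.Finite ∧ S.ncard = k ∧ dbDirDominating S}

/-- Adjacency in the undirected `t`-constrained de Bruijn graph `cDB(d,t,n)`: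
edge directions are ignored and loops are removed. -/
def dbAdj {d t n : ℕ} (x y : dbVtx d t n) : Prop :=
  x ≠ y ∧ (dbShift x y ∨ dbShift y x)

/-- `S` is a dominating set of the undirected graph `cDB(d,t,n)`: every vertex
is dominated by (equal to, or adjacent to) some element of `S`. -/
def dbUndirDominating {d t n : ℕ} (S : Set (dbVtx d t n)) : Prop :=
  ∀ v : dbVtx d t n, ∃ s ∈ S, s = v ∨ dbAdj s v

/-- The domination number `γ(cDB(d,t,n))` of the undirected `t`-constrained
de Bruijn graph. -/
noncomputable def gammaUndir (d t n : ℕ) : ℕ :=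
  sInf {k | ∃ S : Set (dbVtx d t n), S.Finite ∧ S.ncard = k ∧ dbUndirDominating S}

/-! A vertex `v` with the symbol `b` at position `p` is the out-neighbour of every vertex
`(a, v₀, …, v_{n-2})` with `a` a symbol not occurring in `v₀ … v_{n-2}`, and that predecessor
carries `b` at position `p + 1`. Fixing one fresh `a` per word, the predecessors needed are
indexed by the injective words of length `n - 2` over the `d - 1` symbols other than `b`:
there are `(d - 1)!/(d - n + 1)!` of them. -/

open Function

theorem dbConstrained_self_iff_injective {d n : ℕ} {x : Fin n → Fin d} :
    dbConstrained d n n x ↔ Injective x := by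
  refine ⟨fun hx i j hij => ?_, fun hx i j hij heq => absurd (hx heq) hij.ne⟩
  by_contra hne
  rcases lt_or_gt_of_ne hne with h | h
  · have := hx i j h hij
    omega
  · have := hx j i h hij.symm
    omega

theorem exists_notMem_range_of_card_lt {α β : Type*} [Fintype α] [Fintype β] (f : α → β)
    (h : Fintype.card α < Fintype.card β) : ∃ b, b ∉ Set.range f := by
  by_contra! hf
  exact (Fintype.card_le_of_surjective f hf).not_gt h

theorem Fin.insertNth_injective {α : Type*} {k : ℕ} {p : Fin (k + 1)} {x : α} {f : Fin k → α}
    (hx : x ∉ Set.range f) (hf : Injective f) : Injective (p.insertNth x f) := by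
  intro a b hab
  induction a using p.succAboveCases <;> induction b using p.succAboveCases <;>
    simp_all [hf.eq_iff]

section Predecessor

variable {d m : ℕ}

noncomputable def consFresh (w : Fin m ↪ Fin d) (hmd : m < d) : dbVtx d (m + 1) (m + 1) :=
  have hfresh := exists_notMem_range_of_card_lt w (by simpa using hmd)
  ⟨Fin.cons hfresh.choose w,
    dbConstrained_self_iff_injective.2 (Fin.cons_injective_of_injective hfresh.choose_spec w.2)⟩

theorem consFresh_apply_succ (w : Fin m ↪ Fin d) (hmd : m < d) (j : Fin m) :
    (consFresh w hmd).val j.succ = w j := by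
  simp [consFresh]

def initEmb (v : dbVtx d (m + 1) (m + 1)) : Fin m ↪ Fin d :=
  ⟨Fin.init v.val, (dbConstrained_self_iff_injective.1 v.2).comp (Fin.castSucc_injective m)⟩

theorem dbShift_consFresh_initEmb (v : dbVtx d (m + 1) (m + 1)) (hmd : m < d) :
    dbShift (consFresh (initEmb v) hmd) v := by
  intro j h
  exact (consFresh_apply_succ (initEmb v) hmd ⟨j, by omega⟩).symm

end Predecessor

section Block

variable {d k : ℕ}

/-- The vertex `(a, e₀, …, e_{p-1}, b, e_p, …, e_{k-1})` of `cDB⁺(d, k+2, k+2)`, with `a` fresh. -/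
noncomputable def blockVtx (p : Fin (k + 1)) (b : Fin d) (hkd : k + 1 < d)
    (e : Fin k ↪ {y : Fin d // y ≠ b}) : dbVtx d (k + 2) (k + 2) :=
  consFresh ⟨p.insertNth b (Subtype.val ∘ e),
    Fin.insertNth_injective (fun ⟨j, hj⟩ => (e j).2 hj) (Subtype.val_injective.comp e.2)⟩ hkd

theorem blockVtx_apply_succ (p : Fin (k + 1)) (b : Fin d) (hkd : k + 1 < d)
    (e : Fin k ↪ {y : Fin d // y ≠ b}) : (blockVtx p b hkd e).val p.succ = b := by
  simp [blockVtx, consFresh_apply_succ]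

theorem blockVtx_injective (p : Fin (k + 1)) (b : Fin d) (hkd : k + 1 < d) :
    Injective (blockVtx p b hkd) := by
  intro e e' h
  refine Embedding.ext fun j => Subtype.ext ?_
  have := congrArg (fun v : dbVtx d (k + 2) (k + 2) => v.val (p.succAbove j).succ) h
  simpa [blockVtx, consFresh_apply_succ] using this

theorem exists_dbShift_blockVtx (p : Fin (k + 1)) (b : Fin d) (hkd : k + 1 < d)
    (v : dbVtx d (k + 2) (k + 2)) (hv : v.val p.castSucc = b) :
    ∃ e, dbShift (blockVtx p b hkd e) v := by
  have hinj := dbConstrained_self_iff_injective.1 v.2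
  let e : Fin k ↪ {y : Fin d // y ≠ b} :=
    ⟨fun j => ⟨v.val (p.succAbove j).castSucc, fun h => Fin.succAbove_ne p j
      (Fin.castSucc_injective _ (hinj (h.trans hv.symm)))⟩,
     fun j j' h => Fin.succAbove_right_injective
      (Fin.castSucc_injective _ (hinj (congrArg Subtype.val h)))⟩
  have he : blockVtx p b hkd e = consFresh (initEmb v) hkd := by
    rw [blockVtx]
    congr
    exact Fin.insertNth_eq_iff.2 ⟨hv.symm, rfl⟩
  exact ⟨e, he ▸ dbShift_consFresh_initEmb v hkd⟩

theorem exists_block_dominating_set (p : Fin (k + 1)) (b : Fin d) (hkd : k + 1 < d) :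
    ∃ S : Set (dbVtx d (k + 2) (k + 2)), S ⊆ {s | s.val p.succ = b} ∧ S.Finite ∧
      S.ncard = (d - 1).descFactorial k ∧
      ∀ v : dbVtx d (k + 2) (k + 2), v.val p.castSucc = b → ∃ s ∈ S, dbShift s v := by
  refine ⟨Set.range (blockVtx p b hkd), ?_, Set.finite_range _, ?_, ?_⟩
  · rintro _ ⟨e, rfl⟩
    exact blockVtx_apply_succ p b hkd e
  · rw [Set.ncard_range_of_injective (blockVtx_injective p b hkd), Nat.card_eq_fintype_card,
      Fintype.card_embedding_eq]
    simp
  · intro v hv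
    obtain ⟨e, he⟩ := exists_dbShift_blockVtx p b hkd v hv
    exact ⟨_, Set.mem_range_self e, he⟩

end Block

/-- in `cDB⁺(n+c,n,n)`, for `2 ≤ i ≤ n` there is a subset
`S ⊆ A_i` of cardinality `(n+c-1)!/(c+1)!` dominating all vertices of `A_{i-1}`
(every vertex of `A_{i-1}` is an out-neighbor of some vertex of `S`).
`A_j` is the set of vertices whose `j`-th coordinate is the symbol `n+c`
(the top element of `Fin (n+c)`). -/
theorem directed_A_partition_block_domination (n c i : ℕ) (hn : 2 ≤ n)
    (hi2 : 2 ≤ i) (hin : i ≤ n) :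
    ∃ S : Set (dbVtx (n + c) n n),
      S ⊆ {v : dbVtx (n + c) n n |
            ((v.val ⟨i - 1, by omega⟩ : ℕ) = n + c - 1)} ∧
      S.Finite ∧
      S.ncard = (n + c - 1).factorial / (c + 1).factorial ∧
      ∀ v : dbVtx (n + c) n n,
        ((v.val ⟨i - 2, by omega⟩ : ℕ) = n + c - 1) →
          ∃ s ∈ S, dbShift s v := by
  obtain ⟨k, rfl⟩ : ∃ k, n = k + 2 := ⟨n - 2, by omega⟩
  let p : Fin (k + 1) := ⟨i - 2, by omega⟩
  obtain ⟨S, hSA, hfin, hcard, hdom⟩ :=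
    exists_block_dominating_set p (⟨k + 2 + c - 1, by omega⟩ : Fin (k + 2 + c)) (by omega)
  have hsucc : (⟨i - 1, by omega⟩ : Fin (k + 2)) = p.succ := Fin.ext (by simp [p]; omega)
  refine ⟨S, fun s hs => ?_, hfin, ?_, fun v hv => hdom v (Fin.ext hv)⟩
  · simp only [Set.mem_ofPred_eq, hsucc]
    exact congrArg Fin.val (hSA hs)
  · rw [hcard, Nat.descFactorial_eq_div (by omega)]
    congr 3
    omega
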